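/- arXiv:2008.07059 — 2 statements merged into one kernel-verified Lean document; each statement's English description precedes it below -/
import Mathlib

section
/- Let n ≥ 2 and write det(xI − M) = x^{n+1} + a_1 x^n + … + a_{n−1} x² + a_n x. Then (−1)^{n−1} a_{n−1} = (49n³ + 63n² + 38n)/150 · (1/7)^{n−1}; equivalently, the coefficient of x² in the characteristic polynomial of M equals (−1)^{n−1} · (49n³ + 63n² + 38n)/(150 · 7^{n−1}). -/
/-!
Expanding `det (X • 1 - M)` along its first row and then along the first column of the
surviving minor expresses it through the characteristic polynomials `p k` of the trailing
blocks of `M`, which obey the three-term recurrence `p (k + 2) = (X - 2/7) p (k + 1) - p k / 49`.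
Its characteristic roots coincide at `-1/7`, so the coefficients of `X ^ 0`, `X ^ 1`, `X ^ 2`
of `p k` are `(-1/7) ^ k` times polynomials in `k` of degree `0`, `2`, `4`, each found by
induction from the previous one. The coefficient of `X ^ 2` of the characteristic polynomial of
`M` is a linear combination of these.
-/

/-- The tridiagonal matrix `M` (of size `(n+1) × (n+1)`). -/
noncomputable def Mmat (n : ℕ) : Matrix (Fin (n+1)) (Fin (n+1)) ℝ :=
  Matrix.of fun i j =>
    if i = j then (if i.val = 0 ∨ i.val = n then 1/5 else 2/7)
    else if i.val + 1 = j.val ∨ j.val + 1 = i.val then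
      (if min i.val j.val = 0 ∨ max i.val j.val = n then -(1/Real.sqrt 35) else -(1/7))
    else 0

open Polynomial Matrix

namespace Matrix

variable {R : Type*}

theorem det_eq_sub_of_first_row_col_zero [CommRing R] {n : ℕ}
    (A : Matrix (Fin (n + 2)) (Fin (n + 2)) R)
    (hrow : ∀ j : Fin n, A 0 j.succ.succ = 0) (hcol : ∀ i : Fin n, A i.succ.succ 0 = 0) :
    A.det = A 0 0 * (A.submatrix Fin.succ Fin.succ).det
      - A 0 1 * A 1 0 * ((A.submatrix Fin.succ Fin.succ).submatrix Fin.succ Fin.succ).det := by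
  have hminor : (A.submatrix Fin.succ (Fin.succAbove 1)).det
      = A 1 0 * ((A.submatrix Fin.succ Fin.succ).submatrix Fin.succ Fin.succ).det := by
    rw [det_succ_column_zero, Fin.sum_univ_succ]
    simp [hcol, Fin.succAbove_zero, Function.comp_def]
  rw [det_succ_row_zero, Fin.sum_univ_succ, Fin.sum_univ_succ]
  simp [hrow, hminor]
  ring

def tridiagonal [Zero R] (n : ℕ) (d e : ℕ → R) : Matrix (Fin n) (Fin n) R :=
  of fun i j =>
    if i = j then d i else if (i : ℕ) + 1 = j then e i else if (j : ℕ) + 1 = i then e j else 0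

theorem tridiagonal_submatrix_succ [Zero R] (n : ℕ) (d e : ℕ → R) :
    (tridiagonal (n + 1) d e).submatrix Fin.succ Fin.succ
      = tridiagonal n (fun i => d (i + 1)) (fun i => e (i + 1)) := by
  ext i j
  simp [tridiagonal]

variable [CommRing R]

theorem det_tridiagonal_succ_succ (n : ℕ) (d e : ℕ → R) :
    (tridiagonal (n + 2) d e).det
      = d 0 * (tridiagonal (n + 1) (fun i => d (i + 1)) (fun i => e (i + 1))).det
        - e 0 ^ 2 * (tridiagonal n (fun i => d (i + 2)) (fun i => e (i + 2))).det := by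
  rw [det_eq_sub_of_first_row_col_zero, tridiagonal_submatrix_succ, tridiagonal_submatrix_succ]
  · simp [tridiagonal, sq]
  · intro j
    simp [tridiagonal, (Fin.succ_ne_zero _).symm]
  · intro i
    simp [tridiagonal]

theorem charmatrix_tridiagonal (n : ℕ) (d e : ℕ → R) :
    charmatrix (tridiagonal n d e)
      = tridiagonal n (fun i => X - C (d i)) (fun i => -C (e i)) := by
  ext i j
  by_cases h : i = j
  · simp [tridiagonal, h]
  · simp only [charmatrix_apply_ne _ _ _ h, tridiagonal, of_apply, h, if_false]
    split_ifs <;> simp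

theorem charpoly_tridiagonal_succ_succ (n : ℕ) (d e : ℕ → R) :
    (tridiagonal (n + 2) d e).charpoly
      = (X - C (d 0)) * (tridiagonal (n + 1) (fun i => d (i + 1)) (fun i => e (i + 1))).charpoly
        - C (e 0 ^ 2) * (tridiagonal n (fun i => d (i + 2)) (fun i => e (i + 2))).charpoly := by
  simp only [charpoly, charmatrix_tridiagonal, det_tridiagonal_succ_succ, neg_sq, C_pow]

end Matrix

namespace Polynomial

variable {R : Type*} [CommRing R]

theorem coeff_X_sub_C_mul_sub_C_mul_zero (a b : R) (p q : R[X]) :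
    ((X - C a) * p - C b * q).coeff 0 = -a * p.coeff 0 - b * q.coeff 0 := by
  simp [sub_mul]

theorem coeff_X_sub_C_mul_sub_C_mul_succ (a b : R) (p q : R[X]) (n : ℕ) :
    ((X - C a) * p - C b * q).coeff (n + 1)
      = p.coeff n - a * p.coeff (n + 1) - b * q.coeff (n + 1) := by
  simp [sub_mul, coeff_X_mul]

end Polynomial

theorem Mmat_eq_tridiagonal (n : ℕ) :
    Mmat n = tridiagonal (n + 1) (fun i => if i = 0 ∨ i = n then 1/5 else 2/7)
      (fun i => if i = 0 ∨ i + 1 = n then -(1 / √35) else -(1/7)) := by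
  ext i j
  simp only [Mmat, tridiagonal, of_apply, Fin.ext_iff]
  split_ifs <;> first | rfl | omega

/-- The trailing `(k + 1) × (k + 1)` block of `Mmat n`, for any `n > k`. -/
noncomputable def Mtail (k : ℕ) : Matrix (Fin (k + 1)) (Fin (k + 1)) ℝ :=
  tridiagonal (k + 1) (fun i => if i = k then 1/5 else 2/7)
    (fun i => if i + 1 = k then -(1 / √35) else -(1/7))

/-- `tailCharpoly 0` is not a characteristic polynomial: `7/5` is the value for which the
recurrence also gives `(Mtail 1).charpoly = (X - 2/7) (X - 1/5) - 1/35`. -/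
noncomputable def tailCharpoly : ℕ → ℝ[X]
  | 0 => C (7/5)
  | 1 => X - C (1/5)
  | k + 2 => (X - C (2/7)) * tailCharpoly (k + 1) - C (1/49) * tailCharpoly k

theorem charpoly_Mtail (k : ℕ) : (Mtail k).charpoly = tailCharpoly (k + 1) := by
  induction k using Nat.twoStepInduction with
  | zero => simp [Mtail, charpoly, tridiagonal, tailCharpoly, det_unique]
  | one =>
    rw [Mtail, charpoly_tridiagonal_succ_succ]
    have hcoeff : (35⁻¹ : ℝ) = 49⁻¹ * (7/5) := by norm_num
    simp [tailCharpoly, charpoly, tridiagonal, det_unique, hcoeff]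
  | more k ih0 ih1 =>
    rw [Mtail, charpoly_tridiagonal_succ_succ, tailCharpoly, ← ih0, ← ih1]
    have hcoeff : ((7 : ℝ) ^ 2)⁻¹ = 49⁻¹ := by norm_num
    simp [Mtail, hcoeff]

theorem charpoly_Mmat (m : ℕ) :
    (Mmat (m + 2)).charpoly
      = (X - C (1/5)) * tailCharpoly (m + 2) - C (1/35) * tailCharpoly (m + 1) := by
  rw [Mmat_eq_tridiagonal, charpoly_tridiagonal_succ_succ, ← charpoly_Mtail, ← charpoly_Mtail]
  simp [Mtail]

theorem tailCharpoly_coeff_zero (k : ℕ) : (tailCharpoly k).coeff 0 = 7/5 * (-1/7) ^ k := by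
  induction k using Nat.twoStepInduction with
  | zero => simp [tailCharpoly]
  | one => norm_num [tailCharpoly]
  | more k ih0 ih1 =>
    rw [tailCharpoly, coeff_X_sub_C_mul_sub_C_mul_zero, ih0, ih1]
    ring

theorem tailCharpoly_coeff_one (k : ℕ) :
    (tailCharpoly k).coeff 1 = -7 * k * (7 * k + 3) / 10 * (-1/7) ^ k := by
  induction k using Nat.twoStepInduction with
  | zero => simp [tailCharpoly]
  | one => norm_num [tailCharpoly]
  | more k ih0 ih1 =>
    rw [tailCharpoly, coeff_X_sub_C_mul_sub_C_mul_succ, ih0, ih1, tailCharpoly_coeff_zero]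
    push_cast
    ring

theorem tailCharpoly_coeff_two (k : ℕ) :
    (tailCharpoly k).coeff 2 = 49 * k * (k - 1) * (k + 1) * (7 * k + 6) / 120 * (-1/7) ^ k := by
  induction k using Nat.twoStepInduction with
  | zero => simp [tailCharpoly]
  | one => norm_num [tailCharpoly, coeff_X]
  | more k ih0 ih1 =>
    rw [tailCharpoly, coeff_X_sub_C_mul_sub_C_mul_succ, ih0, ih1, tailCharpoly_coeff_one]
    push_cast
    ring

/-- Writing `det(xI − M) = x^{n+1} + a_1 x^n + ⋯ + a_{n−1} x² + a_n x`, one has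
`(−1)^{n−1} a_{n−1} = (49n³ + 63n² + 38n)/150 · (1/7)^{n−1}`, i.e. the coefficient
of `x²` in the characteristic polynomial of `M` satisfies this identity. -/
theorem neg_one_pow_mul_charpoly_coeff_two_Mmat (n : ℕ) (hn : 2 ≤ n) :
    (-1 : ℝ)^(n-1) * (Mmat n).charpoly.coeff 2
      = (49 * (n : ℝ)^3 + 63 * (n : ℝ)^2 + 38 * (n : ℝ)) / 150 * (1/7)^(n-1) := by
  obtain ⟨m, rfl⟩ : ∃ m, n = m + 2 := ⟨n - 2, by omega⟩
  rw [charpoly_Mmat, coeff_X_sub_C_mul_sub_C_mul_succ, tailCharpoly_coeff_one,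
    tailCharpoly_coeff_two, tailCharpoly_coeff_two, show m + 2 - 1 = m + 1 by omega]
  have hpow (k : ℕ) : (-1/7 : ℝ) ^ k = (-1) ^ k * (1/7) ^ k := by
    rw [← mul_pow]
    norm_num
  simp only [hpow, pow_succ]
  push_cast
  rcases neg_one_pow_eq_or ℝ m with h | h <;> simp only [h] <;> ring
end

section
/- Let n ≥ 2. Then M is positive semidefinite with a one-dimensional kernel (0 is a simple eigenvalue of M and all other eigenvalues are positive), and N is positive definite (all eigenvalues of N are positive). -/
/-- The tridiagonal matrix `N` (of size `(n+1) × (n+1)`). -/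
noncomputable def Nmat (n : ℕ) : Matrix (Fin (n+1)) (Fin (n+1)) ℝ :=
  Matrix.of fun i j =>
    if i = j then (if i.val = 0 ∨ i.val = n then 3/5 else 4/7)
    else if i.val + 1 = j.val ∨ j.val + 1 = i.val then
      (if min i.val j.val = 0 ∨ max i.val j.val = n then -(1/Real.sqrt 35) else -(1/7))
    else 0

/-!
With `D = diagonal (5^{-1/2}, 7^{-1/2}, …, 7^{-1/2}, 5^{-1/2})` and `L` the Laplacian of the path
graph on `n + 1` vertices, `M = D L D` and `N = M + 2 D² = D (L + 2) D`. The Laplacian is positive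
semidefinite and, the path being connected, has a one-dimensional kernel (the constants); conjugating
by the invertible `D` preserves both facts. Adding the positive diagonal `2 D²` makes `N` definite.
-/

open Matrix Finset SimpleGraph

instance (n : ℕ) : DecidableRel (pathGraph n).Adj :=
  fun _ _ => decidable_of_iff' _ pathGraph_adj

theorem degree_pathGraph {n : ℕ} (i : Fin (n + 1)) :
    (pathGraph (n + 1)).degree i = (if i.val < n then 1 else 0) + (if 0 < i.val then 1 else 0) := by
  have hdisj (j : ℕ) : (if i.val + 1 = j ∨ j + 1 = i.val then 1 else 0) =
      (if i.val + 1 = j then 1 else 0) + (if j + 1 = i.val then 1 else 0) := by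
    split_ifs <;> omega
  rw [← Nat.cast_id ((pathGraph (n + 1)).degree i), degree_eq_sum_if_adj]
  simp only [pathGraph_adj]
  rw [Fin.sum_univ_eq_sum_range (fun j => if i.val + 1 = j ∨ j + 1 = i.val then 1 else 0)]
  simp only [hdisj, sum_add_distrib, sum_ite_eq, mem_range]
  rcases i with ⟨_ | k, hk⟩
  · simp
  · simp; omega

theorem finrank_ker_lapMatrix_pathGraph (n : ℕ) :
    Module.finrank ℝ (LinearMap.ker ((pathGraph (n + 1)).lapMatrix ℝ).mulVecLin) = 1 := by
  have := (pathGraph_preconnected (n + 1)).subsingleton_connectedComponent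
  rw [← Matrix.toLin'_apply', ← card_connectedComponent_eq_finrank_ker_toLin'_lapMatrix]
  exact Fintype.card_eq_one_iff.mpr ⟨connectedComponentMk _ 0, fun _ => Subsingleton.elim _ _⟩

theorem Matrix.finrank_ker_mulVecLin_mul_mul {ι K : Type*} [Field K] [Fintype ι] [DecidableEq ι]
    (A P Q : Matrix ι ι K) (hP : IsUnit P.det) (hQ : IsUnit Q.det) :
    Module.finrank K (LinearMap.ker (P * A * Q).mulVecLin) =
      Module.finrank K (LinearMap.ker A.mulVecLin) := by
  have hrank : (P * A * Q).rank = A.rank := by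
    rw [rank_mul_eq_left_of_isUnit_det _ _ hQ, rank_mul_eq_right_of_isUnit_det _ _ hP]
  have h₁ := LinearMap.finrank_range_add_finrank_ker (P * A * Q).mulVecLin
  have h₂ := LinearMap.finrank_range_add_finrank_ker A.mulVecLin
  unfold Matrix.rank at hrank
  omega

-- `pathWeight n i ^ 2 * degree i` is the diagonal entry of `Mmat n`.
noncomputable def pathWeight (n : ℕ) (i : Fin (n + 1)) : ℝ :=
  if i.val = 0 ∨ i.val = n then (√5)⁻¹ else (√7)⁻¹

theorem pathWeight_pos (n : ℕ) (i : Fin (n + 1)) : 0 < pathWeight n i := by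
  unfold pathWeight; split_ifs <;> positivity

theorem isUnit_det_diagonal_pathWeight (n : ℕ) : IsUnit (diagonal (pathWeight n)).det := by
  rw [det_diagonal, isUnit_iff_ne_zero]
  exact prod_ne_zero_iff.mpr fun i _ => (pathWeight_pos n i).ne'

theorem Mmat_eq_diagonal_mul_lapMatrix_mul_diagonal {n : ℕ} (hn : 2 ≤ n) :
    Mmat n = diagonal (pathWeight n) * (pathGraph (n + 1)).lapMatrix ℝ *
      diagonal (pathWeight n) := by
  have h5 : √5 * √5 = 5 := Real.mul_self_sqrt (by norm_num)
  have h7 : √7 * √7 = 7 := Real.mul_self_sqrt (by norm_num)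
  have h35 : √35 = √5 * √7 := by rw [← Real.sqrt_mul (by norm_num)]; norm_num
  ext i j
  simp only [mul_diagonal, diagonal_mul, lapMatrix, degMatrix, Matrix.sub_apply, diagonal_apply,
    adjMatrix_apply, pathGraph_adj, degree_pathGraph, Mmat, of_apply, pathWeight, Fin.ext_iff, h35]
  split_ifs <;> first | omega | (field_simp; norm_num [h5, h7])

theorem Nmat_eq_Mmat_add_diagonal (n : ℕ) :
    Nmat n = Mmat n + diagonal fun i => 2 * pathWeight n i ^ 2 := by
  ext i j
  by_cases hij : i = j
  · subst hij
    simp only [Nmat, Mmat, pathWeight, of_apply, Matrix.add_apply, diagonal_apply_eq, if_true]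
    split_ifs <;> norm_num
  · simp only [Nmat, Mmat, of_apply, Matrix.add_apply, diagonal_apply_ne _ hij, if_neg hij,
      add_zero]

theorem Mmat_posSemidef {n : ℕ} (hn : 2 ≤ n) : (Mmat n).PosSemidef := by
  rw [Mmat_eq_diagonal_mul_lapMatrix_mul_diagonal hn]
  simpa using (posSemidef_lapMatrix ℝ (pathGraph (n + 1))).conjTranspose_mul_mul_same
    (diagonal (pathWeight n))

theorem finrank_ker_Mmat {n : ℕ} (hn : 2 ≤ n) :
    Module.finrank ℝ (LinearMap.ker (Mmat n).mulVecLin) = 1 := by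
  rw [Mmat_eq_diagonal_mul_lapMatrix_mul_diagonal hn, finrank_ker_mulVecLin_mul_mul _ _ _
    (isUnit_det_diagonal_pathWeight n) (isUnit_det_diagonal_pathWeight n)]
  exact finrank_ker_lapMatrix_pathGraph n

theorem Nmat_posDef {n : ℕ} (hn : 2 ≤ n) : (Nmat n).PosDef := by
  rw [Nmat_eq_Mmat_add_diagonal]
  exact PosDef.posSemidef_add (Mmat_posSemidef hn)
    (PosDef.diagonal fun i => by have := pathWeight_pos n i; positivity)

/-- For `n ≥ 2`, `M` is positive semidefinite with a one-dimensional kernel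
(so `0` is a simple eigenvalue of `M` and all of its other eigenvalues are
positive), and `N` is positive definite. -/
theorem Mmat_posSemidef_and_Nmat_posDef (n : ℕ) (hn : 2 ≤ n) :
    (Mmat n).PosSemidef
      ∧ Module.finrank ℝ (LinearMap.ker (Mmat n).mulVecLin) = 1
      ∧ (Nmat n).PosDef := by
  exact ⟨Mmat_posSemidef hn, finrank_ker_Mmat hn, Nmat_posDef hn⟩
end
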